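/- For any nonempty bounded set F ⊆ ℝ^d and θ ∈ (0,1), the Assouad spectrum satisfies dim_A^θ F ≤ (upper box dimension of F)/(1−θ). -/

import Mathlib

open Filter MeasureTheory
open scoped Topology ENNReal

/-- `coverN E r` is the smallest number of sets of diameter at most `r` needed to cover `E`. -/
noncomputable def coverN {X : Type*} [PseudoMetricSpace X] (E : Set X) (r : ℝ) : ℕ :=
  sInf {n : ℕ | ∃ s : Finset (Set X),
    s.card = n ∧ (∀ U ∈ s, Metric.diam U ≤ r) ∧ E ⊆ ⋃ U ∈ s, U}

/-- The Assouad spectrum of a set at parameter `θ`. -/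
noncomputable def assouadSpectrum {X : Type*} [PseudoMetricSpace X] (F : Set X) (θ : ℝ) : ℝ :=
  sInf {α : ℝ | 0 ≤ α ∧ ∃ C : ℝ, 0 < C ∧ ∀ x ∈ F, ∀ r : ℝ, 0 < r → r < 1 →
    (coverN (Metric.closedBall x (r ^ θ) ∩ F) r : ℝ) ≤ C * (r ^ θ / r) ^ α}

/-- The upper box dimension of a set. -/
noncomputable def upperBoxDim {X : Type*} [PseudoMetricSpace X] (F : Set X) : ℝ :=
  Filter.limsup (fun r : ℝ => Real.log (coverN F r : ℝ) / (-Real.log r))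
    (nhdsWithin (0 : ℝ) (Set.Ioi 0))

/-!
Every `r`-cover of `F` also covers `B(x, r^θ) ∩ F`, and `(r^θ / r)^α = r^(-(1-θ)α)`. So once
`(1-θ)α` exceeds the upper box dimension, `N_r(F) ≤ r^(-(1-θ)α)` for all small `r`, which is the
Assouad-spectrum bound with exponent `α`; larger scales only cost a constant.

The limsup defining `upperBoxDim` is a junk value unless `log N_r(F) / -log r` is bounded above,
which holds because a grid of mesh `r` shows `N_r(F) = O(r^(-d))` for bounded `F ⊆ ℝ^d`.
-/

section PseudoMetric

variable {X : Type*} [PseudoMetricSpace X]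

lemma coverN_le_card {E : Set X} {r : ℝ} {s : Finset (Set X)}
    (hdiam : ∀ U ∈ s, Metric.diam U ≤ r) (hcover : E ⊆ ⋃ U ∈ s, U) : coverN E r ≤ s.card :=
  Nat.sInf_le ⟨s, rfl, hdiam, hcover⟩

lemma TotallyBounded.exists_finset_cover_diam_le {E : Set X} (hE : TotallyBounded E) {r : ℝ}
    (hr : 0 < r) : ∃ s : Finset (Set X), (∀ U ∈ s, Metric.diam U ≤ r) ∧ E ⊆ ⋃ U ∈ s, U := by
  classical
  obtain ⟨t, ht, hcover⟩ := Metric.totallyBounded_iff.mp hE (r / 2) (half_pos hr)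
  refine ⟨ht.toFinset.image (Metric.ball · (r / 2)), ?_, ?_⟩
  · simp only [Finset.forall_mem_image]
    intro y _
    simpa [mul_div_cancel₀] using Metric.diam_ball (x := y) (half_pos hr).le
  · simpa using hcover

lemma coverN_mono {E F : Set X} (hF : TotallyBounded F) (hEF : E ⊆ F) {r r' : ℝ}
    (hr' : 0 < r') (hr'r : r' ≤ r) : coverN E r ≤ coverN F r' := by
  obtain ⟨s, hdiam, hcover⟩ := hF.exists_finset_cover_diam_le hr'
  have hmem : coverN F r' ∈ {n : ℕ | ∃ s : Finset (Set X),
      s.card = n ∧ (∀ U ∈ s, Metric.diam U ≤ r') ∧ F ⊆ ⋃ U ∈ s, U} :=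
    Nat.sInf_mem ⟨s.card, s, rfl, hdiam, hcover⟩
  obtain ⟨t, hcard, htdiam, htcover⟩ := hmem
  exact hcard ▸ coverN_le_card (fun U hU => (htdiam U hU).trans hr'r) (hEF.trans htcover)

lemma coverN_le_card_of_mapsTo {ι : Type*} {E : Set X} {r : ℝ} (hr : 0 ≤ r) (g : X → ι)
    (t : Finset ι) (hmaps : Set.MapsTo g E t)
    (hfiber : ∀ x ∈ E, ∀ y ∈ E, g x = g y → dist x y ≤ r) : coverN E r ≤ t.card := by
  classical
  refine (coverN_le_card (s := t.image fun k => E ∩ g ⁻¹' {k}) ?_ ?_).trans Finset.card_image_le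
  · simp only [Finset.forall_mem_image]
    intro k _
    exact Metric.diam_le_of_forall_dist_le hr fun x hx y hy =>
      hfiber x hx.1 y hy.1 (hx.2.trans hy.2.symm)
  · intro x hx
    simp only [Finset.mem_image, Set.mem_iUnion, exists_prop]
    exact ⟨_, ⟨g x, hmaps hx, rfl⟩, hx, rfl⟩

lemma upperBoxDim_nonneg {F : Set X}
    (hbdd : IsBoundedUnder (· ≤ ·) (𝓝[>] 0) fun r => Real.log (coverN F r) / -Real.log r) :
    0 ≤ upperBoxDim F := by
  refine le_limsup_of_frequently_le (Eventually.frequently ?_) hbdd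
  filter_upwards [Ioo_mem_nhdsGT one_pos] with r hr
  exact div_nonneg (Real.log_natCast_nonneg _) (neg_nonneg.mpr (Real.log_nonpos hr.1.le hr.2.le))

lemma eventually_coverN_le_rpow_neg {F : Set X} {s : ℝ}
    (hbdd : IsBoundedUnder (· ≤ ·) (𝓝[>] 0) fun r => Real.log (coverN F r) / -Real.log r)
    (hs : upperBoxDim F < s) : ∀ᶠ r in 𝓝[>] 0, (coverN F r : ℝ) ≤ r ^ (-s) := by
  filter_upwards [eventually_lt_of_limsup_lt hs hbdd, Ioo_mem_nhdsGT one_pos] with r hlt hr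
  have hlog : 0 < -Real.log r := neg_pos.mpr (Real.log_neg hr.1 hr.2)
  rcases (coverN F r).eq_zero_or_pos with h0 | hpos
  · rw [h0, Nat.cast_zero]
    exact Real.rpow_nonneg hr.1.le _
  · rw [← Real.log_le_log_iff (by positivity) (Real.rpow_pos_of_pos hr.1 _), Real.log_rpow hr.1]
    linarith [(div_lt_iff₀ hlog).mp hlt]

/-- Below some scale `δ` the covering numbers of `F` are at most `r ^ (-s)`; above it they are at
most `coverN F δ`, which `r ^ (-s) ≥ 1` absorbs into the constant. -/
lemma exists_coverN_le_mul_rpow_neg {F : Set X} (hF : TotallyBounded F) {s : ℝ} (hs : 0 ≤ s)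
    (hsmall : ∀ᶠ r in 𝓝[>] 0, (coverN F r : ℝ) ≤ r ^ (-s)) :
    ∃ C > 0, ∀ E ⊆ F, ∀ r, 0 < r → r < 1 → (coverN E r : ℝ) ≤ C * r ^ (-s) := by
  obtain ⟨δ, hδ, hδsmall⟩ := mem_nhdsGT_iff_exists_Ioo_subset.mp hsmall
  refine ⟨max (coverN F δ) 1, by positivity, fun E hE r hr0 hr1 => ?_⟩
  have hpow : 1 ≤ r ^ (-s) :=
    Real.one_le_rpow_of_pos_of_le_one_of_nonpos hr0 hr1.le (neg_nonpos.mpr hs)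
  rcases lt_or_ge r δ with hrδ | hδr
  · calc (coverN E r : ℝ) ≤ coverN F r := by exact_mod_cast coverN_mono hF hE hr0 le_rfl
      _ ≤ r ^ (-s) := hδsmall ⟨hr0, hrδ⟩
      _ ≤ max (coverN F δ : ℝ) 1 * r ^ (-s) :=
        le_mul_of_one_le_left (by positivity) (le_max_right _ _)
  · calc (coverN E r : ℝ) ≤ coverN F δ := by exact_mod_cast coverN_mono hF hE hδ hδr
      _ ≤ max (coverN F δ : ℝ) 1 := le_max_left _ _
      _ ≤ max (coverN F δ : ℝ) 1 * r ^ (-s) := le_mul_of_one_le_right (by positivity) hpow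

end PseudoMetric

lemma isBoundedUnder_log_div_neg_log {N : ℝ → ℕ} {B : ℝ} (hB : 1 ≤ B) (k : ℕ)
    (hN : ∀ r, 0 < r → r ≤ 1 → (N r : ℝ) ≤ (B / r) ^ k) :
    IsBoundedUnder (· ≤ ·) (𝓝[>] 0) fun r => Real.log (N r) / -Real.log r := by
  refine isBoundedUnder_of_eventually_le (a := 2 * k) ?_
  filter_upwards [Ioo_mem_nhdsGT (by positivity : (0 : ℝ) < 1 / B)] with r ⟨hr0, hrB⟩
  have hr1 : r < 1 := hrB.trans_le (div_le_one_of_le₀ hB (zero_le_one.trans hB))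
  have hlogB : 0 ≤ Real.log B := Real.log_nonneg hB
  have hlogr : Real.log B < -Real.log r := by
    have := Real.log_lt_log hr0 hrB
    rw [one_div, Real.log_inv] at this
    linarith
  have hlogN : Real.log (N r) ≤ k * (Real.log B - Real.log r) := by
    rcases (N r).eq_zero_or_pos with h0 | hpos
    · rw [h0, Nat.cast_zero, Real.log_zero]
      have : 0 ≤ Real.log B - Real.log r := by linarith
      positivity
    · calc Real.log (N r) ≤ Real.log ((B / r) ^ k) :=
            Real.log_le_log (by exact_mod_cast hpos) (hN r hr0 hr1.le)
        _ = k * (Real.log B - Real.log r) := by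
            rw [Real.log_pow, Real.log_div (by positivity) hr0.ne']
  rw [div_le_iff₀ (by linarith)]
  nlinarith [(Nat.cast_nonneg k : (0 : ℝ) ≤ k)]

section Euclidean

variable {d : ℕ}

lemma EuclideanSpace.dist_le_of_floor_div_eq {ε : ℝ} (hε : 0 < ε)
    {x y : EuclideanSpace ℝ (Fin d)} (h : ∀ i, ⌊x i / ε⌋ = ⌊y i / ε⌋) :
    dist x y ≤ √d * ε := by
  have hcoord : ∀ i, dist (x i) (y i) ^ 2 ≤ ε ^ 2 := fun i => by
    have := Int.abs_sub_lt_one_of_floor_eq_floor (h i)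
    rw [← sub_div, abs_div, abs_of_pos hε, div_lt_one hε] at this
    rw [Real.dist_eq]
    exact pow_le_pow_left₀ (abs_nonneg _) this.le 2
  calc dist x y = √(∑ i, dist (x i) (y i) ^ 2) := EuclideanSpace.dist_eq x y
    _ ≤ √(∑ _i : Fin d, ε ^ 2) := Real.sqrt_le_sqrt (Finset.sum_le_sum fun i _ => hcoord i)
    _ = √d * ε := by
      rw [Finset.sum_const, Finset.card_univ, Fintype.card_fin, nsmul_eq_mul,
        Real.sqrt_mul (Nat.cast_nonneg d), Real.sqrt_sq hε.le]

/-- Cover by the cubes of side `ε` of the integer grid `ε ℤ^d`. -/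
lemma coverN_le_of_subset_closedBall {F : Set (EuclideanSpace ℝ (Fin d))} {R ε r : ℝ}
    (hF : F ⊆ Metric.closedBall 0 R) (hε : 0 < ε) (hεr : √d * ε ≤ r) :
    coverN F r ≤ (2 * ⌈R / ε⌉₊ + 1) ^ d := by
  set m := ⌈R / ε⌉₊
  have hmaps : Set.MapsTo (fun x : EuclideanSpace ℝ (Fin d) => fun i => ⌊x i / ε⌋) F
      (Fintype.piFinset fun _ => Finset.Icc (-(m : ℤ)) m : Finset (Fin d → ℤ)) := by
    intro x hx
    simp only [Finset.mem_coe, Fintype.mem_piFinset, Finset.mem_Icc]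
    intro i
    have hxi : |x i| ≤ R := by
      simpa [Real.norm_eq_abs] using
        (PiLp.norm_apply_le x i).trans (mem_closedBall_zero_iff.mp (hF hx))
    have habs : |x i / ε| ≤ m := by
      rw [abs_div, abs_of_pos hε]
      exact (div_le_div_of_nonneg_right hxi hε.le).trans (Nat.le_ceil _)
    obtain ⟨hlo, hhi⟩ := abs_le.mp habs
    exact ⟨Int.le_floor.mpr (by push_cast; exact hlo),
      (Int.floor_mono hhi).trans_eq (Int.floor_natCast m)⟩
  calc coverN F r ≤ (Fintype.piFinset fun _ => Finset.Icc (-(m : ℤ)) m : Finset (Fin d → ℤ)).card :=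
        coverN_le_card_of_mapsTo ((by positivity : 0 ≤ √d * ε).trans hεr) _ _ hmaps
          fun x _ y _ hxy => (EuclideanSpace.dist_le_of_floor_div_eq hε (congrFun hxy)).trans hεr
    _ = (2 * m + 1) ^ d := by
      rw [Fintype.card_piFinset, Int.card_Icc, Finset.prod_const, Finset.card_univ,
        Fintype.card_fin]
      congr 1
      omega

lemma coverN_le_div_pow_of_subset_closedBall {F : Set (EuclideanSpace ℝ (Fin d))} {R r : ℝ}
    (hR : 0 ≤ R) (hF : F ⊆ Metric.closedBall 0 R) (hr0 : 0 < r) (hr1 : r ≤ 1) :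
    (coverN F r : ℝ) ≤ ((2 * R * (√d + 1) + 3) / r) ^ d := by
  have hd : 0 < √d + 1 := by positivity
  set ε := r / (√d + 1)
  have hε : 0 < ε := by positivity
  have hεr : √d * ε ≤ r := by
    rw [mul_div_assoc', div_le_iff₀ hd]
    nlinarith
  have hm : (⌈R / ε⌉₊ : ℝ) < R * (√d + 1) / r + 1 := by
    rw [← div_div_eq_mul_div]
    exact Nat.ceil_lt_add_one (by positivity)
  have hbase : 2 * (⌈R / ε⌉₊ : ℝ) + 1 ≤ (2 * R * (√d + 1) + 3) / r := by
    have h3 : 3 ≤ 3 / r := by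
      rw [le_div_iff₀ hr0]
      linarith
    rw [add_div, mul_assoc, mul_div_assoc]
    linarith
  calc (coverN F r : ℝ) ≤ ((2 * ⌈R / ε⌉₊ + 1) ^ d : ℕ) := by
        exact_mod_cast coverN_le_of_subset_closedBall hF hε hεr
    _ ≤ ((2 * R * (√d + 1) + 3) / r) ^ d := by
        push_cast
        exact pow_le_pow_left₀ (by positivity) hbase d

lemma isBoundedUnder_log_coverN_div_neg_log {F : Set (EuclideanSpace ℝ (Fin d))}
    (hF : Bornology.IsBounded F) :
    IsBoundedUnder (· ≤ ·) (𝓝[>] 0) fun r => Real.log (coverN F r) / -Real.log r := by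
  obtain ⟨R, hR, hFR⟩ := hF.subset_closedBall_lt 0 0
  have hB : 1 ≤ 2 * R * (√d + 1) + 3 := le_add_of_nonneg_of_le (by positivity) (by norm_num)
  exact isBoundedUnder_log_div_neg_log hB d fun r hr0 hr1 =>
    coverN_le_div_pow_of_subset_closedBall hR.le hFR hr0 hr1

end Euclidean

theorem assouadSpectrum_le_upperBoxDim_div_general (d : ℕ) (F : Set (EuclideanSpace ℝ (Fin d)))
    (hbd : Bornology.IsBounded F) (θ : ℝ) (hθ : θ ∈ Set.Ioo (0 : ℝ) 1) :
    assouadSpectrum F θ ≤ upperBoxDim F / (1 - θ) := by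
  have h1θ : 0 < 1 - θ := sub_pos.mpr hθ.2
  have hbdd := isBoundedUnder_log_coverN_div_neg_log hbd
  refine le_of_forall_gt_imp_ge_of_dense fun α hα => ?_
  have hα0 : 0 ≤ α := (div_nonneg (upperBoxDim_nonneg hbdd) h1θ.le).trans hα.le
  have hs : upperBoxDim F < (1 - θ) * α := by rwa [div_lt_iff₀' h1θ] at hα
  obtain ⟨C, hC, hcover⟩ := exists_coverN_le_mul_rpow_neg
    (hbd.isCompact_closure.totallyBounded.subset subset_closure) (by positivity)
    (eventually_coverN_le_rpow_neg hbdd hs)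
  refine csInf_le ⟨0, fun _ h => h.1⟩ ⟨hα0, C, hC, fun x _ r hr0 hr1 => ?_⟩
  have hscale : (r ^ θ / r) ^ α = r ^ (-((1 - θ) * α)) := by
    rw [← Real.rpow_sub_one hr0.ne', ← Real.rpow_mul hr0.le]
    ring_nf
  rw [hscale]
  exact hcover _ Set.inter_subset_right r hr0 hr1

/-- For any nonempty bounded `F ⊆ ℝ^d` and `θ ∈ (0,1)`,
`dim_A^θ F ≤ (upper box dimension of F)/(1-θ)`. -/
theorem assouadSpectrum_le_upperBoxDim_div (d : ℕ) (F : Set (EuclideanSpace ℝ (Fin d)))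
    (hne : F.Nonempty) (hbd : Bornology.IsBounded F) (θ : ℝ) (hθ : θ ∈ Set.Ioo (0 : ℝ) 1) :
    assouadSpectrum F θ ≤ upperBoxDim F / (1 - θ) :=
  assouadSpectrum_le_upperBoxDim_div_general d F hbd θ hθ
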